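/- arXiv:1609.05328 — 5 statements merged into one kernel-verified Lean document; each statement's English description precedes it below -/
import Mathlib

section
/- Let K be a field, let n = p + q, and let η be the n×n diagonal matrix with p diagonal entries equal to 1 and q diagonal entries equal to −1, defining the bilinear form ⟨x, y⟩ = xᵀ η y on K^n. Let v_1, …, v_k, w_1, …, w_{n−k} ∈ K^n satisfy ⟨v_i, w_j⟩ = 0 for all i, j, and let M be the n×n matrix whose rows are v_1, …, v_k, w_1, …, w_{n−k}. Then det(⟨v_i, v_j⟩)_{i,j=1}^k · det(⟨w_i, w_j⟩)_{i,j=1}^{n−k} = (−1)^q · (det M)^2. -/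
/-- The pseudo-Euclidean bilinear form of signature `(p,q)` on `K^(p+q)`:
`⟨x,y⟩ = xᵀ η y` where `η` is diagonal with `p` ones followed by `q` minus-ones. -/
def pseudoForm (K : Type*) [Field K] (p q : ℕ) (x y : Fin (p + q) → K) : K :=
  ∑ i : Fin (p + q), (if i.val < p then x i * y i else - (x i * y i))

/-- For mutually orthogonal families `v₁,…,v_k` and `w₁,…,w_{n-k}` in the
pseudo-Euclidean space `K^{p+q}` of signature `(p,q)`, the product of their Gram determinants
equals `(-1)^q (det M)²`, where `M` is the matrix whose rows are `v₁,…,v_k,w₁,…,w_{n-k}`. -/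
theorem gram_det_orthogonal_product
    (K : Type*) [Field K] (p q k : ℕ) (hk : k ≤ p + q)
    (v : Fin k → (Fin (p + q) → K)) (w : Fin (p + q - k) → (Fin (p + q) → K))
    (horth : ∀ i j, pseudoForm K p q (v i) (w j) = 0)
    (M : Matrix (Fin k ⊕ Fin (p + q - k)) (Fin k ⊕ Fin (p + q - k)) K)
    (hM : ∀ i j, M i j =
      Sum.elim v w i (finCongr (by omega : k + (p + q - k) = p + q) (finSumFinEquiv j))) :
    Matrix.det (Matrix.of fun i j : Fin k => pseudoForm K p q (v i) (v j)) *
        Matrix.det (Matrix.of fun i j : Fin (p + q - k) => pseudoForm K p q (w i) (w j))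
      = (-1 : K) ^ q * Matrix.det M ^ 2 := by
  have h : k + (p + q - k) = p + q := by omega
  set e : (Fin k ⊕ Fin (p + q - k)) ≃ Fin (p + q) :=
    finSumFinEquiv.trans (finCongr h) with he
  set d : Fin (p + q) → K := fun i => if i.val < p then 1 else -1 with hd
  have hform : ∀ x y : Fin (p + q) → K,
      pseudoForm K p q x y = ∑ i, d i * x i * y i := by
    intro x y
    unfold pseudoForm
    apply Finset.sum_congr rfl
    intro i _
    by_cases hi : i.val < p <;> simp [hd, hi]
  have hsym : ∀ x y, pseudoForm K p q x y = pseudoForm K p q y x := by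
    intro x y; rw [hform, hform]; apply Finset.sum_congr rfl; intros; ring
  have hMrow : ∀ i j, M i j = Sum.elim v w i (e j) := by
    intro i j; rw [hM]; rfl
  have key : M * (Matrix.diagonal d).submatrix e e * M.transpose =
      Matrix.fromBlocks (Matrix.of fun i j : Fin k => pseudoForm K p q (v i) (v j)) 0 0
        (Matrix.of fun i j : Fin (p + q - k) => pseudoForm K p q (w i) (w j)) := by
    have entry : ∀ i j, (M * (Matrix.diagonal d).submatrix e e * M.transpose) i j =
        pseudoForm K p q (Sum.elim v w i) (Sum.elim v w j) := by
      intro i j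
      rw [Matrix.submatrix_diagonal_equiv, Matrix.mul_apply, hform]
      rw [← Equiv.sum_comp e (fun t => d t * Sum.elim v w i t * Sum.elim v w j t)]
      apply Finset.sum_congr rfl
      intro b _
      rw [Matrix.mul_diagonal, Matrix.transpose_apply, hMrow, hMrow]
      simp only [Function.comp_apply]
      ring
    ext i j
    rw [entry]
    cases i with
    | inl i =>
      cases j with
      | inl j => simp
      | inr j => simp [horth]
    | inr i =>
      cases j with
      | inl j => simp only [Sum.elim_inl, Sum.elim_inr, Matrix.fromBlocks_apply₂₁,
          Matrix.zero_apply]; rw [hsym]; exact horth j i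
      | inr j => simp
  have hdetD : ((Matrix.diagonal d).submatrix e e).det = (-1 : K) ^ q := by
    rw [Matrix.det_submatrix_equiv_self, Matrix.det_diagonal]
    rw [Fin.prod_univ_add (f := d)]
    have h1 : ∀ i : Fin p, d (Fin.castAdd q i) = 1 := by
      intro i; simp [hd, i.isLt]
    have h2 : ∀ i : Fin q, d (Fin.natAdd p i) = -1 := by
      intro i; simp [hd]
    simp [h1, h2]
  calc Matrix.det (Matrix.of fun i j : Fin k => pseudoForm K p q (v i) (v j)) *
        Matrix.det (Matrix.of fun i j : Fin (p + q - k) => pseudoForm K p q (w i) (w j))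
      = (M * (Matrix.diagonal d).submatrix e e * M.transpose).det := by
        rw [key, Matrix.det_fromBlocks_zero₂₁]
    _ = (-1 : K) ^ q * Matrix.det M ^ 2 := by
        rw [Matrix.det_mul, Matrix.det_mul, Matrix.det_transpose, hdetD]
        ring
end

section
/- Let K = ℝ(u_1, …, u_s) be a field of rational functions over ℝ, equipped on K^n with the standard dot product x · y = Σ_i x_i y_i. Let v_1, …, v_k ∈ K^n be linearly independent over K, let w_1, …, w_{n−k} ∈ K^n be linearly independent over K, and suppose v_i · w_j = 0 for all i, j. Then the Gram determinant det(v_i · v_j)_{i,j=1}^k is the square of an element of K if and only if the Gram determinant det(w_i · w_j)_{i,j=1}^{n−k} is the square of an element of K. -/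
open Matrix

-- sum of squares of real mv-polynomials vanishing implies each is zero
lemma mvpoly_sum_sq_eq_zero {s : ℕ} {ι : Type*} [Fintype ι]
    (p : ι → MvPolynomial (Fin s) ℝ) (h : ∑ i, p i * p i = 0) : ∀ i, p i = 0 := by
  intro i
  apply MvPolynomial.funext
  intro x
  have hx := congrArg (MvPolynomial.eval x) h
  simp only [map_sum, _root_.map_mul, map_zero] at hx
  have h0 : ∀ j ∈ Finset.univ, (0:ℝ) ≤ MvPolynomial.eval x (p j) * MvPolynomial.eval x (p j) :=
    fun j _ => mul_self_nonneg _
  have := (Finset.sum_eq_zero_iff_of_nonneg h0).mp hx i (Finset.mem_univ i)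
  simpa using mul_self_eq_zero.mp this

-- anisotropy in the fraction field
lemma frac_sum_sq_eq_zero {s : ℕ} {ι : Type*} [Fintype ι]
    (x : ι → FractionRing (MvPolynomial (Fin s) ℝ))
    (h : ∑ i, x i * x i = 0) : ∀ i, x i = 0 := by
  classical
  set R := MvPolynomial (Fin s) ℝ
  obtain ⟨b, hb⟩ := IsLocalization.exist_integer_multiples_of_finite
    (nonZeroDivisors R) x
  choose p hp using hb
  have key : ∑ i, p i * p i = 0 := by
    apply IsFractionRing.injective R (FractionRing R)
    rw [map_zero, map_sum]
    have : ∀ i, (algebraMap R (FractionRing R)) (p i * p i)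
        = (algebraMap R (FractionRing R)) b * (algebraMap R (FractionRing R)) b * (x i * x i) := by
      intro i
      rw [_root_.map_mul, hp i, Algebra.smul_def]
      ring
    rw [Finset.sum_congr rfl (fun i _ => this i), ← Finset.mul_sum, h, mul_zero]
  intro i
  have hpi : p i = 0 := mvpoly_sum_sq_eq_zero p key i
  have : (algebraMap R (FractionRing R)) b * x i = 0 := by
    rw [← Algebra.smul_def, ← hp i, hpi, map_zero]
  have hbne : (algebraMap R (FractionRing R)) b ≠ 0 :=
    IsFractionRing.to_map_ne_zero_of_mem_nonZeroDivisors b.2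
  exact (mul_eq_zero.mp this).resolve_left hbne

-- Gram determinant of linearly independent vectors is nonzero (anisotropic form)
lemma gram_det_ne_zero {K : Type*} [Field K] {n m : ℕ}
    (aniso : ∀ x : Fin n → K, ∑ t, x t * x t = 0 → x = 0)
    (v : Fin m → (Fin n → K)) (hv : LinearIndependent K v) :
    (Matrix.of fun i j : Fin m => ∑ t, v i t * v j t).det ≠ 0 := by
  classical
  intro hdet
  obtain ⟨c, hc0, hc⟩ := (Matrix.exists_mulVec_eq_zero_iff).mpr hdet
  set x : Fin n → K := fun t => ∑ j, c j * v j t with hxdef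
  have hvx : ∀ i, ∑ t, v i t * x t = 0 := by
    intro i
    have := congrFun hc i
    simp only [Matrix.mulVec, dotProduct, Matrix.of_apply, Pi.zero_apply] at this
    calc ∑ t, v i t * x t = ∑ t, ∑ j, v i t * (c j * v j t) := by
          simp [hxdef, Finset.mul_sum]
      _ = ∑ j, ∑ t, v i t * (c j * v j t) := Finset.sum_comm
      _ = ∑ j, (∑ t, v i t * v j t) * c j := by
          refine Finset.sum_congr rfl fun j _ => ?_
          rw [Finset.sum_mul]; exact Finset.sum_congr rfl fun t _ => by ring
      _ = 0 := this
  have hxx : ∑ t, x t * x t = 0 := by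
    calc ∑ t, x t * x t = ∑ t, ∑ j, c j * (v j t * x t) := by
          simp [hxdef, Finset.sum_mul, mul_assoc]
      _ = ∑ j, c j * ∑ t, v j t * x t := by
          rw [Finset.sum_comm]; exact Finset.sum_congr rfl fun j _ => by rw [Finset.mul_sum]
      _ = 0 := by simp [hvx]
  have hx0 : x = 0 := aniso x hxx
  have : ∑ j, c j • v j = 0 := by
    funext t
    simpa [hxdef] using congrFun hx0 t
  exact hc0 (funext fun j => Fintype.linearIndependent_iff.mp hv c this j)

lemma gram_mul_gram_eq_sq {K : Type*} [Field K] {n k m : ℕ} (h : k + m = n)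
    (v : Fin k → (Fin n → K)) (w : Fin m → (Fin n → K))
    (horth : ∀ i j, ∑ t, v i t * w j t = 0) :
    ∃ d : K, (Matrix.of fun i j : Fin k => ∑ t, v i t * v j t).det *
      (Matrix.of fun i j : Fin m => ∑ t, w i t * w j t).det = d ^ 2 := by
  classical
  set e : Fin k ⊕ Fin m ≃ Fin n := finSumFinEquiv.trans (finCongr h) with he
  set N : Matrix (Fin k ⊕ Fin m) (Fin k ⊕ Fin m) K :=
    Matrix.of (fun i j => Sum.elim v w i (e j)) with hN
  have key : N * Nᵀ = Matrix.fromBlocks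
      (Matrix.of fun i j : Fin k => ∑ t, v i t * v j t) 0 0
      (Matrix.of fun i j : Fin m => ∑ t, w i t * w j t) := by
    ext i j
    have base : ∀ a b : Fin n → K, ∑ t : Fin k ⊕ Fin m, a (e t) * b (e t) = ∑ t, a t * b t :=
      fun a b => Fintype.sum_equiv e _ _ (fun t => rfl)
    cases i with
    | inl i =>
      cases j with
      | inl j => simpa [hN, Matrix.mul_apply, Matrix.transpose_apply] using base (v i) (v j)
      | inr j =>
        simpa [hN, Matrix.mul_apply, Matrix.transpose_apply, horth i j] using base (v i) (w j)
    | inr i =>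
      cases j with
      | inl j =>
        have : ∑ t, w i t * v j t = 0 := by
          rw [← horth j i]; exact Finset.sum_congr rfl fun t _ => mul_comm _ _
        simpa [hN, Matrix.mul_apply, Matrix.transpose_apply, this] using base (w i) (v j)
      | inr j => simpa [hN, Matrix.mul_apply, Matrix.transpose_apply] using base (w i) (w j)
  refine ⟨N.det, ?_⟩
  have := congrArg Matrix.det key
  rw [Matrix.det_mul, Matrix.det_transpose, Matrix.det_fromBlocks_zero₂₁] at this
  rw [← this]; ring


open Matrix in
/-- Over the field `K = ℝ(u₁,…,u_s)` with the standard dot product on `K^n`,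
if `v₁,…,v_k` and `w₁,…,w_{n-k}` are linearly independent families that are mutually
orthogonal, then the Gram determinant of `v` is a square in `K` iff the Gram determinant of
`w` is a square in `K`. -/
theorem gram_det_square_iff_orthocomplement
    (s n k : ℕ) (hk : k ≤ n)
    (v : Fin k → (Fin n → FractionRing (MvPolynomial (Fin s) ℝ)))
    (w : Fin (n - k) → (Fin n → FractionRing (MvPolynomial (Fin s) ℝ)))
    (hv : LinearIndependent (FractionRing (MvPolynomial (Fin s) ℝ)) v)
    (hw : LinearIndependent (FractionRing (MvPolynomial (Fin s) ℝ)) w)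
    (horth : ∀ i j, ∑ t, v i t * w j t = 0) :
    (∃ σ : FractionRing (MvPolynomial (Fin s) ℝ),
        Matrix.det (Matrix.of fun i j : Fin k => ∑ t, v i t * v j t) = σ ^ 2) ↔
    (∃ σ : FractionRing (MvPolynomial (Fin s) ℝ),
        Matrix.det (Matrix.of fun i j : Fin (n - k) => ∑ t, w i t * w j t) = σ ^ 2) := by
  have aniso : ∀ x : Fin n → FractionRing (MvPolynomial (Fin s) ℝ),
      ∑ t, x t * x t = 0 → x = 0 := by
    intro x hx
    funext t
    exact frac_sum_sq_eq_zero x hx t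
  have ha : (Matrix.of fun i j : Fin k => ∑ t, v i t * v j t).det ≠ 0 :=
    gram_det_ne_zero aniso v hv
  have hb : (Matrix.of fun i j : Fin (n - k) => ∑ t, w i t * w j t).det ≠ 0 :=
    gram_det_ne_zero aniso w hw
  obtain ⟨d, hd⟩ := gram_mul_gram_eq_sq (by omega) v w horth
  set a := (Matrix.of fun i j : Fin k => ∑ t, v i t * v j t).det
  set b := (Matrix.of fun i j : Fin (n - k) => ∑ t, w i t * w j t).det
  constructor
  · rintro ⟨σ, hσ⟩
    have hσ0 : σ ≠ 0 := by rintro rfl; simp at hσ; exact ha hσ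
    refine ⟨d / σ, ?_⟩
    field_simp
    rw [← hd, hσ]; try ring
  · rintro ⟨σ, hσ⟩
    have hσ0 : σ ≠ 0 := by rintro rfl; simp at hσ; exact hb hσ
    refine ⟨d / σ, ?_⟩
    field_simp
    rw [← hd, hσ]; try ring
end

section
/- Let n = (n_1, n_2, n_3) ∈ ℝ[u, v]^3 be nonzero and such that every common divisor of n_1, n_2, n_3 in ℝ[u, v] is a unit. Let q, r ∈ Syz(n). Then (q, r) form a basis of the ℝ[u, v]-module Syz(n) if and only if there exists a nonzero constant c ∈ ℝ such that q × r = c · n, where × denotes the cross product (q × r)_1 = q_2 r_3 − q_3 r_2, (q × r)_2 = q_3 r_1 − q_1 r_3, (q × r)_3 = q_1 r_2 − q_2 r_1 computed in ℝ[u, v]. -/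
/-- The syzygy module of a polynomial vector field `n = (n₁,n₂,n₃) ∈ ℝ[u,v]³`:
all `q ∈ ℝ[u,v]³` with `q₁n₁ + q₂n₂ + q₃n₃ = 0`. -/
noncomputable def Syz (n : Fin 3 → MvPolynomial (Fin 2) ℝ) :
    Submodule (MvPolynomial (Fin 2) ℝ) (Fin 3 → MvPolynomial (Fin 2) ℝ) where
  carrier := {q | ∑ i, q i * n i = 0}
  add_mem' := by
    intro a b ha hb
    simp only [Set.mem_setOf_eq] at *
    simp [Pi.add_apply, add_mul, Finset.sum_add_distrib, ha, hb]
  zero_mem' := by simp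
  smul_mem' := by
    intro c a ha
    simp only [Set.mem_setOf_eq] at *
    simp [Pi.smul_apply, smul_eq_mul, mul_assoc, ← Finset.mul_sum, ha]

/-- The cross product of triples of polynomials, computed in `ℝ[u,v]`. -/
noncomputable def cross (a b : Fin 3 → MvPolynomial (Fin 2) ℝ) :
    Fin 3 → MvPolynomial (Fin 2) ℝ :=
  ![a 1 * b 2 - a 2 * b 1, a 2 * b 0 - a 0 * b 2, a 0 * b 1 - a 1 * b 0]

/-!
Syzygies of `n` are the vectors orthogonal to `n`, so the cross product of two of them is
orthogonal to both and hence parallel to `n`; as the entries of `n` have no common factor, it is a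
polynomial multiple `f • n`. If `(q, r)` is a basis, the Koszul syzygies `y × n` are combinations
of `q` and `r`, so `(y × n) × (z × n) = det(y, z, n) • n` is a multiple of `q × r = f • n`; this
makes `f` divide every `n i`, hence a unit, hence a nonzero constant. Conversely, let
`q × r = c • n` with `c` a unit and let `s` be a syzygy, so `s × q = f • n` and `s × r = g • n`.
Cramer's rule for `s, q, r`, whose determinant `c (s ⬝ n)` vanishes, gives
`c (n j) s = (g (n j)) q - (f (n j)) r`; cancelling `n j ≠ 0` puts `s` in the span of `q, r`.
Independence follows from `q × r ≠ 0`.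
-/

open Matrix

theorem dvd_of_forall_dvd_mul {α ι : Type*} [CommMonoidWithZero α] [UniqueFactorizationMonoid α]
    [Fintype ι] {a w : α} {b : ι → α} (hb : ∀ d, (∀ i, d ∣ b i) → IsUnit d)
    (h : ∀ i, a ∣ w * b i) : a ∣ w := by
  classical
  let := UniqueFactorizationMonoid.strongNormalizationMonoid (α := α)
  let := UniqueFactorizationMonoid.toNormalizedGCDMonoid α
  have hg : IsUnit (Finset.univ.gcd b) := hb _ fun i ↦ Finset.gcd_dvd (Finset.mem_univ i)
  have ha : a ∣ w * Finset.univ.gcd b :=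
    (Finset.gcd_mul_left' _ _ w).dvd_iff_dvd_right.mp (Finset.dvd_gcd_iff.mpr fun i _ ↦ h i)
  exact hg.dvd_mul_right.mp ha

section CrossProduct

variable {R : Type*} [CommRing R]

theorem smul_eq_smul_of_cross_eq_zero {v w : Fin 3 → R} (h : v ⨯₃ w = 0) (j : Fin 3) :
    w j • v = v j • w := by
  classical
  have := cross_cross_eq_smul_sub_smul' (Pi.single j 1) v w
  rwa [h, map_zero, single_dotProduct, dotProduct_single_one, one_mul, eq_comm,
    sub_eq_zero] at this

theorem cross_cross_cross_eq_triple_product_smul (y z n : Fin 3 → R) :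
    (y ⨯₃ n) ⨯₃ (z ⨯₃ n) = (y ⬝ᵥ z ⨯₃ n) • n := by
  simp_rw [cross_apply, vec3_dotProduct]
  ext i
  fin_cases i <;> simp <;> ring

theorem exists_cross_eq_smul_cross_of_mem_span_pair {q r x y : Fin 3 → R}
    (hx : x ∈ Submodule.span R {q, r}) (hy : y ∈ Submodule.span R {q, r}) :
    ∃ d : R, x ⨯₃ y = d • q ⨯₃ r := by
  obtain ⟨a, b, rfl⟩ := Submodule.mem_span_pair.mp hx
  obtain ⟨c, d, rfl⟩ := Submodule.mem_span_pair.mp hy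
  refine ⟨a * d - b * c, ?_⟩
  simp only [map_add, map_smul, LinearMap.add_apply, LinearMap.smul_apply, cross_self, smul_zero,
    ← cross_anticomm q r]
  module

theorem triple_product_smul_eq (s q r x : Fin 3 → R) :
    (s ⬝ᵥ q ⨯₃ r) • x = (q ⨯₃ r ⬝ᵥ x) • s - (s ⨯₃ r ⬝ᵥ x) • q + (s ⨯₃ q ⬝ᵥ x) • r := by
  simp_rw [cross_apply, vec3_dotProduct]
  ext i
  fin_cases i <;> simp <;> ring

variable [IsDomain R]

theorem linearIndependent_pair_iff_cross_ne_zero {v w : Fin 3 → R} :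
    LinearIndependent R ![v, w] ↔ v ⨯₃ w ≠ 0 := by
  rw [LinearIndependent.pair_iff]
  constructor
  · intro hli hvw
    by_cases hv : v = 0
    · simpa using hli 1 0 (by simp [hv])
    obtain ⟨j, hj⟩ := Function.ne_iff.mp hv
    have := hli (w j) (-v j) <| by
      rw [neg_smul, smul_eq_smul_of_cross_eq_zero hvw j, add_neg_cancel]
    exact hj (neg_eq_zero.mp this.2)
  · intro hvw s t hst
    have hs : s • v ⨯₃ w = 0 := by
      simpa [cross_self] using congrArg (· ⨯₃ w) hst
    have ht : t • v ⨯₃ w = 0 := by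
      simpa [cross_self] using congrArg (v ⨯₃ ·) hst
    exact ⟨(smul_eq_zero.mp hs).resolve_right hvw, (smul_eq_zero.mp ht).resolve_right hvw⟩

theorem mem_span_pair_of_cross_eq_smul {n q r s : Fin 3 → R} {c f g : R} (hc : IsUnit c)
    (hn : n ≠ 0) (hs : s ⬝ᵥ n = 0) (hqr : q ⨯₃ r = c • n) (hsq : s ⨯₃ q = f • n)
    (hsr : s ⨯₃ r = g • n) : s ∈ Submodule.span R {q, r} := by
  classical
  obtain ⟨j, hj⟩ := Function.ne_iff.mp hn
  have hcomb : n j • (c • s - g • q + f • r) = 0 := by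
    have key := triple_product_smul_eq s q r (Pi.single j 1)
    simp only [hqr, hsq, hsr, dotProduct_smul, hs, mul_zero, zero_smul, dotProduct_single_one,
      Pi.smul_apply, smul_eq_mul] at key
    linear_combination (norm := module) -key
  replace hcomb := (smul_eq_zero.mp hcomb).resolve_left hj
  obtain ⟨u, rfl⟩ := hc
  refine Submodule.mem_span_pair.mpr ⟨↑u⁻¹ * g, -(↑u⁻¹ * f), ?_⟩
  linear_combination (norm := module) -(↑u⁻¹ : R) • hcomb + u.inv_mul • s

theorem dvd_of_cross_eq_smul {n q r : Fin 3 → R} {f : R} (hn : n ≠ 0) (hqr : q ⨯₃ r = f • n)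
    (hspan : ∀ y, y ⨯₃ n ∈ Submodule.span R {q, r}) (i : Fin 3) : f ∣ n i := by
  have hdvd (y z : Fin 3 → R) : f ∣ y ⬝ᵥ z ⨯₃ n := by
    obtain ⟨d, hd⟩ := exists_cross_eq_smul_cross_of_mem_span_pair (hspan y) (hspan z)
    rw [cross_cross_cross_eq_triple_product_smul, hqr, smul_smul] at hd
    exact ⟨d, by rw [smul_left_injective R hn hd, mul_comm]⟩
  fin_cases i
  · simpa [cross_apply, vec3_dotProduct] using hdvd ![0, 1, 0] ![0, 0, 1]
  · simpa [cross_apply, vec3_dotProduct] using hdvd ![0, 0, 1] ![1, 0, 0]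
  · simpa [cross_apply, vec3_dotProduct] using hdvd ![1, 0, 0] ![0, 1, 0]

variable [UniqueFactorizationMonoid R]

theorem exists_eq_smul_of_cross_eq_zero {n w : Fin 3 → R} (hn : n ≠ 0)
    (hprim : ∀ d, (∀ i, d ∣ n i) → IsUnit d) (h : n ⨯₃ w = 0) : ∃ f : R, w = f • n := by
  have hpar := smul_eq_smul_of_cross_eq_zero h
  have hdvd (i : Fin 3) : n i ∣ w i := dvd_of_forall_dvd_mul hprim fun j ↦
    ⟨w j, by simpa [mul_comm] using (congrFun (hpar j) i).symm⟩
  obtain ⟨i, hi⟩ := Function.ne_iff.mp hn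
  obtain ⟨f, hf⟩ := hdvd i
  refine ⟨f, smul_right_injective _ hi ?_⟩
  change n i • w = n i • f • n
  rw [← hpar i, hf, smul_smul]

theorem exists_cross_eq_smul_of_dotProduct_eq_zero {n s t : Fin 3 → R} (hn : n ≠ 0)
    (hprim : ∀ d, (∀ i, d ∣ n i) → IsUnit d) (hs : s ⬝ᵥ n = 0) (ht : t ⬝ᵥ n = 0) :
    ∃ f : R, s ⨯₃ t = f • n :=
  exists_eq_smul_of_cross_eq_zero hn hprim <| by
    rw [cross_cross_eq_smul_sub_smul', dotProduct_comm n t, ht, hs, zero_smul, zero_smul,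
      sub_zero]

end CrossProduct

theorem mem_Syz {n x : Fin 3 → MvPolynomial (Fin 2) ℝ} : x ∈ Syz n ↔ x ⬝ᵥ n = 0 := Iff.rfl

open MvPolynomial in
/-- Let `n ∈ ℝ[u,v]³` be nonzero with only unit common divisors, and let
`q, r ∈ Syz(n)`. Then `(q, r)` is a basis of `Syz(n)` (i.e. it spans `Syz(n)` and is
`ℝ[u,v]`-linearly independent) iff `q × r = c·n` for some nonzero constant `c ∈ ℝ`. -/
theorem syz_basis_iff_cross_eq_const_smul
    (n : Fin 3 → MvPolynomial (Fin 2) ℝ) (hn : n ≠ 0)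
    (hgcd : ∀ d : MvPolynomial (Fin 2) ℝ, d ∣ n 0 → d ∣ n 1 → d ∣ n 2 → IsUnit d)
    (q r : Fin 3 → MvPolynomial (Fin 2) ℝ) (hq : q ∈ Syz n) (hr : r ∈ Syz n) :
    (Submodule.span (MvPolynomial (Fin 2) ℝ) {q, r} = Syz n ∧
        LinearIndependent (MvPolynomial (Fin 2) ℝ) ![q, r]) ↔
    (∃ c : ℝ, c ≠ 0 ∧ cross q r = fun i => MvPolynomial.C c * n i) := by
  have hprim : ∀ d, (∀ i, d ∣ n i) → IsUnit d := fun d hd ↦ hgcd d (hd 0) (hd 1) (hd 2)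
  have hkoszul (y : Fin 3 → MvPolynomial (Fin 2) ℝ) : y ⨯₃ n ∈ Syz n :=
    mem_Syz.mpr <| (dotProduct_comm _ _).trans (dot_cross_self y n)
  -- `cross` is `crossProduct` unfolded, and `fun i => C c * n i` is `C c • n`
  change _ ↔ ∃ c : ℝ, c ≠ 0 ∧ q ⨯₃ r = (C c : MvPolynomial (Fin 2) ℝ) • n
  rw [linearIndependent_pair_iff_cross_ne_zero]
  constructor
  · rintro ⟨hspan, -⟩
    obtain ⟨f, hf⟩ := exists_cross_eq_smul_of_dotProduct_eq_zero hn hprim hq hr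
    have hunit : IsUnit f := hprim f (dvd_of_cross_eq_smul hn hf fun y ↦ hspan ▸ hkoszul y)
    obtain ⟨c, hc, rfl⟩ := isUnit_iff_eq_C_of_isReduced.mp hunit
    exact ⟨c, hc.ne_zero, hf⟩
  · rintro ⟨c, hc, hqr⟩
    have hC : IsUnit (C c : MvPolynomial (Fin 2) ℝ) := (isUnit_iff_ne_zero.mpr hc).map C
    refine ⟨le_antisymm ?_ fun s hs ↦ ?_, hqr ▸ smul_ne_zero hC.ne_zero hn⟩
    · rw [Submodule.span_le, Set.insert_subset_iff, Set.singleton_subset_iff]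
      exact ⟨hq, hr⟩
    obtain ⟨f, hf⟩ := exists_cross_eq_smul_of_dotProduct_eq_zero hn hprim hs hq
    obtain ⟨g, hg⟩ := exists_cross_eq_smul_of_dotProduct_eq_zero hn hprim hs hr
    exact mem_span_pair_of_cross_eq_smul hC hn hs hqr hf hg
end

section
/- Let N_1, N_2, N_3 ∈ ℂ[u, v, w] be homogeneous polynomials of the same degree k, not all zero, such that every common divisor of N_1, N_2, N_3 is a unit. Suppose a, b, c ∈ ℂ[u, v, w] satisfy N_2 a + N_3 b = 0, N_1 a = N_3 c, and N_1 b + N_2 c = 0. Then there exists h ∈ ℂ[u, v, w] with a = h N_3, b = −h N_2, and c = h N_1. -/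
/-!
Write `N = (N₀, N₁, N₂)` and `v = (c, -b, a)`. The three hypotheses say exactly that the cross
product `N ⨯₃ v` vanishes, i.e. all `2 × 2` minors `Nᵢ vⱼ - Nⱼ vᵢ` of the pair `(N, v)` vanish,
and the conclusion says `v = h • N`. Pick `i` with `Nᵢ ≠ 0`. Every `Nⱼ vᵢ = Nᵢ vⱼ` is divisible
by `Nᵢ`, and since the `Nⱼ` have no common non-unit divisor, taking gcds gives `Nᵢ ∣ vᵢ`, say
`vᵢ = h Nᵢ`. Cancelling `Nᵢ` in `Nᵢ vⱼ = Nⱼ h Nᵢ` then gives `vⱼ = h Nⱼ` for every `j`.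
-/

open Matrix

theorem dvd_of_dvd_mul_of_commonDvd_isUnit {R : Type*} [CommMonoidWithZero R] [GCDMonoid R]
    {p q s r x : R} (h : ∀ d, d ∣ p → d ∣ q → d ∣ s → IsUnit d)
    (hp : r ∣ p * x) (hq : r ∣ q * x) (hs : r ∣ s * x) : r ∣ x := by
  have hg : r ∣ gcd (gcd p q) s * x :=
    (dvd_gcd ((dvd_gcd hp hq).trans (gcd_mul_right' x p q).dvd) hs).trans
      (gcd_mul_right' x (gcd p q) s).dvd
  have hu : IsUnit (gcd (gcd p q) s) :=
    h _ ((gcd_dvd_left _ _).trans (gcd_dvd_left _ _))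
      ((gcd_dvd_left _ _).trans (gcd_dvd_right _ _)) (gcd_dvd_right _ _)
  exact hu.dvd_mul_left.mp hg

theorem mul_eq_mul_of_cross_eq_zero {R : Type*} [CommRing R] {N v : Fin 3 → R}
    (hv : N ⨯₃ v = 0) (i j : Fin 3) : N i * v j = N j * v i := by
  have h₀ : N 1 * v 2 = N 2 * v 1 := sub_eq_zero.mp (by simpa [cross_apply] using congrFun hv 0)
  have h₁ : N 2 * v 0 = N 0 * v 2 := sub_eq_zero.mp (by simpa [cross_apply] using congrFun hv 1)
  have h₂ : N 0 * v 1 = N 1 * v 0 := sub_eq_zero.mp (by simpa [cross_apply] using congrFun hv 2)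
  fin_cases i <;> fin_cases j <;> grind

theorem exists_eq_smul_of_cross_eq_zero_s10 {R : Type*} [CommRing R] [GCDMonoid R]
    {N v : Fin 3 → R} (hN : ∀ d, d ∣ N 0 → d ∣ N 1 → d ∣ N 2 → IsUnit d) (hv : N ⨯₃ v = 0) :
    ∃ h : R, v = h • N := by
  by_cases hzero : N = 0
  · have h01 : (0 : R) = 1 :=
      isUnit_zero_iff.mp (hN 0 (by simp [hzero]) (by simp [hzero]) (by simp [hzero]))
    exact ⟨0, funext fun _ => eq_of_zero_eq_one h01 _ _⟩
  obtain ⟨i, hi⟩ : ∃ i, N i ≠ 0 := Function.ne_iff.mp hzero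
  have hminor := mul_eq_mul_of_cross_eq_zero hv
  have hdvd : ∀ j, N i ∣ N j * v i := fun j => ⟨v j, (hminor i j).symm⟩
  obtain ⟨h, hh⟩ : N i ∣ v i := dvd_of_dvd_mul_of_commonDvd_isUnit hN (hdvd 0) (hdvd 1) (hdvd 2)
  refine ⟨h, funext fun j => mul_left_cancel₀ hi ?_⟩
  calc N i * v j = N j * v i := hminor i j
    _ = N i * (h • N) j := by rw [hh, Pi.smul_apply, smul_eq_mul]; ring

theorem koszul_exact_middle_general
    (N : Fin 3 → MvPolynomial (Fin 3) ℂ)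
    (hgcd : ∀ d : MvPolynomial (Fin 3) ℂ, d ∣ N 0 → d ∣ N 1 → d ∣ N 2 → IsUnit d)
    (a b c : MvPolynomial (Fin 3) ℂ)
    (h1 : N 1 * a + N 2 * b = 0)
    (h2 : N 0 * a = N 2 * c)
    (h3 : N 0 * b + N 1 * c = 0) :
    ∃ h : MvPolynomial (Fin 3) ℂ, a = h * N 2 ∧ b = -(h * N 1) ∧ c = h * N 0 := by
  let := UniqueFactorizationMonoid.toGCDMonoid (MvPolynomial (Fin 3) ℂ)
  have hcross : N ⨯₃ ![c, -b, a] = 0 := by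
    funext i
    fin_cases i <;> simp only [Fin.zero_eta, Fin.mk_one, Fin.reduceFinMk, Fin.isValue, cross_apply,
      cons_val, cons_val_one, cons_val_zero, Pi.zero_apply]
    · linear_combination h1
    · linear_combination -h2
    · linear_combination -h3
  obtain ⟨h, hh⟩ := exists_eq_smul_of_cross_eq_zero_s10 hgcd hcross
  refine ⟨h, ?_, ?_, ?_⟩
  · simpa using congrFun hh 2
  · simpa [neg_eq_iff_eq_neg] using congrFun hh 1
  · simpa using congrFun hh 0

/-- Exactness of the Koszul complex at the middle spot: if `N₁, N₂, N₃`
are homogeneous of the same degree `k`, not all zero, with only unit common divisors, and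
`(a,b,c)` is in the kernel of the second Koszul differential, i.e. `N₂a + N₃b = 0`,
`N₁a = N₃c`, `N₁b + N₂c = 0`, then `(a,b,c) = (hN₃, −hN₂, hN₁)` for some polynomial `h`. -/
theorem koszul_exact_middle
    (N : Fin 3 → MvPolynomial (Fin 3) ℂ) (k : ℕ)
    (hhom : ∀ i, (N i).IsHomogeneous k) (hN : N ≠ 0)
    (hgcd : ∀ d : MvPolynomial (Fin 3) ℂ, d ∣ N 0 → d ∣ N 1 → d ∣ N 2 → IsUnit d)
    (a b c : MvPolynomial (Fin 3) ℂ)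
    (h1 : N 1 * a + N 2 * b = 0)
    (h2 : N 0 * a = N 2 * c)
    (h3 : N 0 * b + N 1 * c = 0) :
    ∃ h : MvPolynomial (Fin 3) ℂ, a = h * N 2 ∧ b = -(h * N 1) ∧ c = h * N 0 :=
  koszul_exact_middle_general N hgcd a b c h1 h2 h3
end

section
/- Let K be a field and equip K^4 with the Minkowski bilinear form ⟨a, b⟩ = a_1 b_1 + a_2 b_2 + a_3 b_3 − a_4 b_4. Let n⁺, n⁻ ∈ K^4 satisfy ⟨n⁺, n⁺⟩ = ⟨n⁻, n⁻⟩ = 0 and ⟨n⁺, n⁻⟩ ≠ 0, and let a, b ∈ K^4 satisfy ⟨a, n⁺⟩ = ⟨a, n⁻⟩ = ⟨b, n⁺⟩ = ⟨b, n⁻⟩ = 0. Then ⟨a, a⟩·⟨b, b⟩ − ⟨a, b⟩^2 is the square of an element of K. -/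
/-- The Minkowski bilinear form of signature `(3,1)` on `K⁴`:
`⟨a,b⟩ = a₁b₁ + a₂b₂ + a₃b₃ − a₄b₄`. -/
def mink {K : Type*} [Field K] (a b : Fin 4 → K) : K :=
  a 0 * b 0 + a 1 * b 1 + a 2 * b 2 - a 3 * b 3

set_option maxHeartbeats 1600000 in
/-- In the Minkowski space `K⁴` of signature `(3,1)`, if `n⁺, n⁻` are
isotropic with `⟨n⁺,n⁻⟩ ≠ 0` and `a, b` are orthogonal to both `n⁺` and `n⁻`, then the Gram
determinant `⟨a,a⟩⟨b,b⟩ − ⟨a,b⟩²` is a square in `K`. -/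
theorem gram_det_is_square_of_isotropic_normals
    {K : Type*} [Field K] (np nm a b : Fin 4 → K)
    (hnp : mink np np = 0) (hnm : mink nm nm = 0) (hne : mink np nm ≠ 0)
    (hanp : mink a np = 0) (hanm : mink a nm = 0)
    (hbnp : mink b np = 0) (hbnm : mink b nm = 0) :
    ∃ s : K, mink a a * mink b b - mink a b ^ 2 = s ^ 2 := by
  simp only [mink] at hnp hnm hanp hanm hbnp hbnm
  set Q : Matrix (Fin 4) (Fin 4) K := (!![1,0,0,0; 0,1,0,0; 0,0,1,0; 0,0,0,-1] : Matrix (Fin 4) (Fin 4) K) with hQ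
  set M : Matrix (Fin 4) (Fin 4) K := Matrix.of ![a, b, np, nm] with hM
  have entry : ∀ i j : Fin 4, (M * Q * M.transpose) i j =
      M i 0 * M j 0 + M i 1 * M j 1 + M i 2 * M j 2 - M i 3 * M j 3 := by
    intro i j
    simp [Matrix.mul_apply, Fin.sum_univ_four, hQ, Matrix.transpose_apply]
    ring
  have hGram : M * Q * M.transpose =
      !![mink a a, mink a b, 0, 0;
         mink a b, mink b b, 0, 0;
         0, 0, 0, mink np nm;
         0, 0, mink np nm, 0] := by
    ext i j
    rw [entry]
    fin_cases i <;> fin_cases j <;>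
      simp [hM, mink, Matrix.vecHead, Matrix.vecTail] <;>
      first
        | ring1
        | linear_combination hanp
        | linear_combination hanm
        | linear_combination hbnp
        | linear_combination hbnm
        | linear_combination hnp
        | linear_combination hnm
  have hdetQ : Q.det = -1 := by
    rw [hQ]
    simp [Matrix.det_succ_row_zero, Fin.sum_univ_succ]
  have hdet1 : (M * Q * M.transpose).det = -(M.det ^ 2) := by
    rw [Matrix.det_mul, Matrix.det_mul, Matrix.det_transpose, hdetQ]
    ring
  have hdet2 : (M * Q * M.transpose).det =
      -((mink a a * mink b b - mink a b ^ 2) * mink np nm ^ 2) := by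
    rw [hGram]
    simp [Matrix.det_succ_row_zero, Fin.sum_univ_succ, Fin.succAbove,
      Matrix.vecHead, Matrix.vecTail]
    ring
  have key : (mink a a * mink b b - mink a b ^ 2) * mink np nm ^ 2 = M.det ^ 2 := by
    have h := hdet1.symm.trans hdet2
    linear_combination h
  refine ⟨M.det / mink np nm, ?_⟩
  field_simp
  linear_combination key
end
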